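/- Abstract saddle-point stability: let H, Q be real Hilbert spaces, a : H × H → ℝ a bounded bilinear form coercive with constant c_a on the kernel V of a bounded bilinear form b : H × Q → ℝ satisfying the inf-sup condition with constant β > 0. Then for any bounded linear functionals F ∈ H', G ∈ Q', the solution (σ, u) of a(σ,τ) + b(τ,u) = F(τ), b(σ,v) = G(v) satisfies ‖σ‖ ≤ (1/c_a + 1/β)(1 + ‖a‖/c_a)(‖F‖ + ‖G‖) — in particular, the solution depends continuously on data with constants depending only on c_a, β, ‖a‖. -/

import Mathlib

/-!
Lift the constraint first: the inf-sup condition says that the Riesz map `T v` of `b(·, v)` is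
bounded below by `β`, so Lax–Milgram applied to the Gram form `⟪T v, T w⟫` gives `σ_G = T w`
with `b(σ_G, ·) = G` and `‖σ_G‖ ≤ ‖G‖ / β`. The remainder `σ - σ_G` lies in the kernel
of `b`, where testing the first equation with it and using coercivity of `a` gives
`c_a ‖σ - σ_G‖ ≤ ‖F‖ + ‖a‖ ‖σ_G‖`.
-/

open InnerProductSpace RealInnerProductSpace

lemma le_div_of_mul_sq_le_mul {c K x : ℝ} (hc : 0 < c) (hK : 0 ≤ K) (hx : 0 ≤ x)
    (h : c * x ^ 2 ≤ K * x) : x ≤ K / c := by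
  rw [le_div_iff₀ hc]
  rcases hx.eq_or_lt with rfl | hx
  · simpa using hK
  · nlinarith

lemma div_add_mul_div_le_mul_add {f g A c β : ℝ} (hf : 0 ≤ f) (hg : 0 ≤ g) (hA : 0 ≤ A)
    (hc : 0 < c) (hβ : 0 < β) :
    f / c + (1 + A) * (g / β) ≤ (1 / c + 1 / β) * (1 + A) * (f + g) := by
  have hgap : (1 / c + 1 / β) * (1 + A) * (f + g) - (f / c + (1 + A) * (g / β))
      = A * f / c + (1 + A) * (g / c + f / β) := by
    field_simp
    ring
  have : 0 ≤ A * f / c + (1 + A) * (g / c + f / β) := by positivity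
  linarith

theorem exists_inner_apply_eq_of_bounded_below {H Q : Type*}
    [NormedAddCommGroup H] [InnerProductSpace ℝ H]
    [NormedAddCommGroup Q] [InnerProductSpace ℝ Q] [CompleteSpace Q]
    (T : Q →L[ℝ] H) {β : ℝ} (hβ : 0 < β)
    (hT : ∀ v : Q, β * ‖v‖ ≤ ‖T v‖) (G : StrongDual ℝ Q) :
    ∃ w : Q, (∀ v : Q, ⟪T w, T v⟫ = G v) ∧ ‖T w‖ ≤ ‖G‖ / β := by
  let B : Q →L[ℝ] Q →L[ℝ] ℝ := (innerSL ℝ).bilinearComp T T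
  have hB : IsCoercive B := by
    refine ⟨β ^ 2, by positivity, fun v => ?_⟩
    have hBvv : B v v = ‖T v‖ ^ 2 := real_inner_self_eq_norm_sq (T v)
    calc β ^ 2 * ‖v‖ * ‖v‖ = (β * ‖v‖) ^ 2 := by ring
      _ ≤ ‖T v‖ ^ 2 := pow_le_pow_left₀ (by positivity) (hT v) 2
      _ = B v v := hBvv.symm
  set w := hB.continuousLinearEquivOfBilin.symm ((toDual ℝ Q).symm G)
  have hw : ∀ v : Q, ⟪T w, T v⟫ = G v := fun v => by
    have := hB.continuousLinearEquivOfBilin_apply w v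
    rw [ContinuousLinearEquiv.apply_symm_apply, toDual_symm_apply] at this
    exact this.symm
  refine ⟨w, hw, le_div_of_mul_sq_le_mul hβ (norm_nonneg G) (norm_nonneg _) ?_⟩
  calc β * ‖T w‖ ^ 2 = β * G w := by rw [← hw, real_inner_self_eq_norm_sq]
    _ ≤ β * (‖G‖ * ‖w‖) := by gcongr; exact (le_abs_self _).trans (G.le_opNorm w)
    _ = ‖G‖ * (β * ‖w‖) := by ring
    _ ≤ ‖G‖ * ‖T w‖ := by gcongr; exact hT w

theorem exists_apply_eq_of_infSup {H Q : Type*}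
    [NormedAddCommGroup H] [InnerProductSpace ℝ H] [CompleteSpace H]
    [NormedAddCommGroup Q] [InnerProductSpace ℝ Q] [CompleteSpace Q]
    (b : H →L[ℝ] Q →L[ℝ] ℝ) {β : ℝ} (hβ : 0 < β)
    (hinfsup : ∀ v : Q, β * ‖v‖ ≤ ‖b.flip v‖) (G : StrongDual ℝ Q) :
    ∃ σG : H, (∀ v : Q, b σG v = G v) ∧ ‖σG‖ ≤ ‖G‖ / β := by
  let T : Q →L[ℝ] H :=
    (toDual ℝ H).symm.toContinuousLinearEquiv.toContinuousLinearMap.comp b.flip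
  have hT : ∀ (v : Q) (τ : H), ⟪T v, τ⟫ = b τ v := fun v τ => toDual_symm_apply
  have hTnorm : ∀ v : Q, β * ‖v‖ ≤ ‖T v‖ := fun v => by
    simpa [T] using hinfsup v
  obtain ⟨w, hw, hnorm⟩ := exists_inner_apply_eq_of_bounded_below T hβ hTnorm G
  refine ⟨T w, fun v => ?_, hnorm⟩
  rw [← hT, real_inner_comm, hw]

theorem norm_le_of_coercive_on_ker {H Q : Type*}
    [NormedAddCommGroup H] [NormedSpace ℝ H] [NormedAddCommGroup Q] [NormedSpace ℝ Q]
    (a : H →L[ℝ] H →L[ℝ] ℝ) (b : H →L[ℝ] Q →L[ℝ] ℝ)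
    {c_a : ℝ} (hca : 0 < c_a)
    (hcoer : ∀ τ : H, (∀ v : Q, b τ v = 0) → c_a * ‖τ‖ ^ 2 ≤ a τ τ)
    (F : StrongDual ℝ H) {σ : H} {u : Q} (heq : ∀ τ : H, a σ τ + b τ u = F τ)
    {σG : H} (hσG : ∀ v : Q, b σG v = b σ v) :
    ‖σ‖ ≤ ‖F‖ / c_a + (1 + ‖a‖ / c_a) * ‖σG‖ := by
  set τ := σ - σG
  have hker : ∀ v : Q, b τ v = 0 := fun v => by simp [τ, hσG]
  have hτ : c_a * ‖τ‖ ^ 2 ≤ (‖F‖ + ‖a‖ * ‖σG‖) * ‖τ‖ := by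
    have hF : F τ ≤ ‖F‖ * ‖τ‖ := (le_abs_self _).trans (F.le_opNorm τ)
    have ha : -a σG τ ≤ ‖a‖ * ‖σG‖ * ‖τ‖ :=
      (neg_le_abs _).trans (a.le_opNorm₂ σG τ)
    have hστ : a σ τ = F τ := by simpa [hker u] using heq τ
    calc c_a * ‖τ‖ ^ 2 ≤ a τ τ := hcoer τ hker
      _ = F τ - a σG τ := by simp [τ, hστ]
      _ ≤ (‖F‖ + ‖a‖ * ‖σG‖) * ‖τ‖ := by linarith
  have hτnorm := le_div_of_mul_sq_le_mul hca (by positivity) (norm_nonneg τ) hτ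
  calc ‖σ‖ = ‖τ + σG‖ := by rw [sub_add_cancel]
    _ ≤ ‖τ‖ + ‖σG‖ := norm_add_le _ _
    _ ≤ (‖F‖ + ‖a‖ * ‖σG‖) / c_a + ‖σG‖ := by gcongr
    _ = ‖F‖ / c_a + (1 + ‖a‖ / c_a) * ‖σG‖ := by field_simp; ring

/-- Abstract saddle-point stability (Babuška–Brezzi): if `a` is a bounded bilinear form
coercive with constant `c_a` on the kernel of a bounded bilinear form `b`, and `b`
satisfies an inf-sup condition with constant `β > 0`, then the solution `(σ, u)` of
`a(σ,τ) + b(τ,u) = F(τ)`, `b(σ,v) = G(v)` satisfies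
`‖σ‖ ≤ (1/c_a + 1/β)(1 + ‖a‖/c_a)(‖F‖ + ‖G‖)`. -/
theorem saddle_point_stability
    {H Q : Type*}
    [NormedAddCommGroup H] [InnerProductSpace ℝ H] [CompleteSpace H]
    [NormedAddCommGroup Q] [InnerProductSpace ℝ Q] [CompleteSpace Q]
    (a : H →L[ℝ] H →L[ℝ] ℝ) (b : H →L[ℝ] Q →L[ℝ] ℝ)
    (c_a β : ℝ) (hca : 0 < c_a) (hβ : 0 < β)
    (hcoer : ∀ τ : H, (∀ v : Q, b τ v = 0) → c_a * ‖τ‖ ^ 2 ≤ a τ τ)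
    (hinfsup : ∀ v : Q, β * ‖v‖ ≤ ‖b.flip v‖)
    (F : H →L[ℝ] ℝ) (G : Q →L[ℝ] ℝ)
    (σ : H) (u : Q)
    (heq1 : ∀ τ : H, a σ τ + b τ u = F τ)
    (heq2 : ∀ v : Q, b σ v = G v) :
    ‖σ‖ ≤ (1 / c_a + 1 / β) * (1 + ‖a‖ / c_a) * (‖F‖ + ‖G‖) := by
  obtain ⟨σG, hσG, hσGnorm⟩ := exists_apply_eq_of_infSup b hβ hinfsup G
  have hlift : ∀ v : Q, b σG v = b σ v := fun v => by rw [hσG, heq2]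
  calc ‖σ‖ ≤ ‖F‖ / c_a + (1 + ‖a‖ / c_a) * ‖σG‖ :=
        norm_le_of_coercive_on_ker a b hca hcoer F heq1 hlift
    _ ≤ ‖F‖ / c_a + (1 + ‖a‖ / c_a) * (‖G‖ / β) := by gcongr
    _ ≤ (1 / c_a + 1 / β) * (1 + ‖a‖ / c_a) * (‖F‖ + ‖G‖) :=
        div_add_mul_div_le_mul_add (norm_nonneg F) (norm_nonneg G) (by positivity) hca hβ
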